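/- arXiv:2304.03339 — 2 statements merged into one kernel-verified Lean document; each statement's English description precedes it below -/
import Mathlib

section
/- Every tangle formula is first-order definable over path-finite wK4 frames: for every formula φ ∈ L_◇^∞ there is a first-order formula θ_φ(x) in the first-order language with one binary relation symbol (for ⊏) and one unary predicate symbol for each propositional variable occurring in φ, such that for every path-finite weakly transitive Kripke model M and every w ∈ M: w ⊨_M φ if and only if M ⊨ θ_φ(w) (with M viewed as a first-order structure). -/
namespace TangledMu

/-- Formulas of the μ-calculus in negation normal form, with de Bruijn fixed-point
variables (`var`), propositional constants (`prop`/`nprop`), and "named" fresh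
variables `x_{νx.φ}` / `x_{μx.φ}` (`fvar true φ` / `fvar false φ`) introduced by the
modified subformula operator `sub*`, together with their negations (`nfvar`). -/
inductive MuForm (P : Type) : Type
  | tru : MuForm P
  | var : Nat → MuForm P
  | prop : P → MuForm P
  | nprop : P → MuForm P
  | fvar : Bool → MuForm P → MuForm P
  | nfvar : Bool → MuForm P → MuForm P
  | and : MuForm P → MuForm P → MuForm P
  | or : MuForm P → MuForm P → MuForm P
  | dia : MuForm P → MuForm P
  | box : MuForm P → MuForm P
  | nu : MuForm P → MuForm P
  | mu : MuForm P → MuForm P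

/-- A Kripke model on the set of worlds `W` with propositional constants `P`. -/
structure KModel (W P : Type) where
  rel : W → W → Prop
  val : P → Set W

/-- Extend an environment for de Bruijn fixed-point variables. -/
def envCons {W : Type} (X : Set W) (e : Nat → Set W) : Nat → Set W
  | 0 => X
  | n + 1 => e n

/-- Kripke semantics of the μ-calculus: `‖◇φ‖ = ‖φ‖↓`, `μ`/`ν` are least/greatest
fixed points; a named variable `x_{νx.φ}` is semantically interpreted as `νx.φ`
(so that satisfaction of a formula of `Σ` is satisfaction of its closed form `⌊φ⌋`). -/
def MuForm.sat {W P : Type} (M : KModel W P) : MuForm P → (Nat → Set W) → Set W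
  | .tru, _ => Set.univ
  | .var n, e => e n
  | .prop p, _ => M.val p
  | .nprop p, _ => (M.val p)ᶜ
  | .fvar b ψ, e =>
      if b then ⋃₀ {X : Set W | X ⊆ MuForm.sat M ψ (envCons X e)}
      else ⋂₀ {X : Set W | MuForm.sat M ψ (envCons X e) ⊆ X}
  | .nfvar b ψ, e =>
      (if b then ⋃₀ {X : Set W | X ⊆ MuForm.sat M ψ (envCons X e)}
       else ⋂₀ {X : Set W | MuForm.sat M ψ (envCons X e) ⊆ X})ᶜ
  | .and φ ψ, e => MuForm.sat M φ e ∩ MuForm.sat M ψ e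
  | .or φ ψ, e => MuForm.sat M φ e ∪ MuForm.sat M ψ e
  | .dia φ, e => {w | ∃ u, M.rel w u ∧ u ∈ MuForm.sat M φ e}
  | .box φ, e => {w | ∀ u, M.rel w u → u ∈ MuForm.sat M φ e}
  | .nu φ, e => ⋃₀ {X : Set W | X ⊆ MuForm.sat M φ (envCons X e)}
  | .mu φ, e => ⋂₀ {X : Set W | MuForm.sat M φ (envCons X e) ⊆ X}

/-- `w ⊨_M φ` (for sentences; fixed-point variables get the empty valuation). -/
def KModel.Sat {W P : Type} (M : KModel W P) (w : W) (φ : MuForm P) : Prop :=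
  w ∈ φ.sat M (fun _ => (∅ : Set W))

/-- `⊑`, the reflexive closure of the accessibility relation. -/
def KModel.rle {W P : Type} (M : KModel W P) (u v : W) : Prop :=
  u = v ∨ M.rel u v

/-- A relation is weakly transitive iff `a ⊏ b ⊏ c` with `a ≠ c` implies `a ⊏ c`. -/
def WeaklyTransitive {W : Type} (r : W → W → Prop) : Prop :=
  ∀ a b c, a ≠ c → r a b → r b c → r a c

/-- Negation, defined classically on negation normal forms
(`¬νx.φ(x) := μx.¬φ(¬x)`, `¬μx.φ(x) := νx.¬φ(¬x)`); `¬⊤` is the contradictory `μx.x`. -/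
def MuForm.neg {P : Type} : MuForm P → MuForm P
  | .tru => .mu (.var 0)
  | .var n => .var n
  | .prop p => .nprop p
  | .nprop p => .prop p
  | .fvar b ψ => .nfvar b ψ
  | .nfvar b ψ => .fvar b ψ
  | .and φ ψ => .or φ.neg ψ.neg
  | .or φ ψ => .and φ.neg ψ.neg
  | .dia φ => .box φ.neg
  | .box φ => .dia φ.neg
  | .nu φ => .mu φ.neg
  | .mu φ => .nu φ.neg

/-- `⋄̇φ := φ ∨ ◇φ`. -/
def dotDia {P : Type} (φ : MuForm P) : MuForm P := .or φ (.dia φ)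

/-- `⊡φ := φ ∧ □φ`. -/
def dotBox {P : Type} (φ : MuForm P) : MuForm P := .and φ (.box φ)

end TangledMu
namespace TangledMu

/-- Substitute the de Bruijn variable `k` by the (closed) formula `t`,
lowering the indices of the variables above `k`. -/
def MuForm.inst {P : Type} (t : MuForm P) : Nat → MuForm P → MuForm P
  | _, .tru => .tru
  | k, .var n => if n = k then t else if k < n then .var (n - 1) else .var n
  | _, .prop p => .prop p
  | _, .nprop p => .nprop p
  | _, .fvar b ψ => .fvar b ψ
  | _, .nfvar b ψ => .nfvar b ψ
  | k, .and φ ψ => .and (MuForm.inst t k φ) (MuForm.inst t k ψ)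
  | k, .or φ ψ => .or (MuForm.inst t k φ) (MuForm.inst t k ψ)
  | k, .dia φ => .dia (MuForm.inst t k φ)
  | k, .box φ => .box (MuForm.inst t k φ)
  | k, .nu φ => .nu (MuForm.inst t (k + 1) φ)
  | k, .mu φ => .mu (MuForm.inst t (k + 1) φ)

/-- One step of the modified subformula operator `sub*`: `SubStep ψ φ` says that
`ψ` is an immediate modified subformula of `φ`.  For `νx.φ` (resp. `μx.φ`) the
immediate modified subformula is `φ(x_{νx.φ})`, the body with the bound variable
replaced by the fresh variable named after the fixed-point formula; `⋄̇σ` and `⊡σ`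
have `σ` as their only immediate modified subformula. -/
inductive SubStep {P : Type} : MuForm P → MuForm P → Prop
  | and_left (φ ψ : MuForm P) : ψ ≠ .box φ → SubStep φ (.and φ ψ)
  | and_right (φ ψ : MuForm P) : ψ ≠ .box φ → SubStep ψ (.and φ ψ)
  | or_left (φ ψ : MuForm P) : ψ ≠ .dia φ → SubStep φ (.or φ ψ)
  | or_right (φ ψ : MuForm P) : ψ ≠ .dia φ → SubStep ψ (.or φ ψ)
  | dotdia (φ : MuForm P) : SubStep φ (dotDia φ)
  | dotbox (φ : MuForm P) : SubStep φ (dotBox φ)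
  | dia (φ : MuForm P) : SubStep φ (.dia φ)
  | box (φ : MuForm P) : SubStep φ (.box φ)
  | nu (φ : MuForm P) : SubStep (MuForm.inst (.fvar true φ) 0 φ) (.nu φ)
  | mu (φ : MuForm P) : SubStep (MuForm.inst (.fvar false φ) 0 φ) (.mu φ)

/-- `Σ` is closed under the modified subformula operator `sub*`. -/
def SubstarClosed {P : Type} (S : Set (MuForm P)) : Prop :=
  ∀ φ ∈ S, ∀ ψ, SubStep ψ φ → ψ ∈ S

/-- `Σ` is closed under negation. -/
def NegClosed {P : Type} (S : Set (MuForm P)) : Prop :=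
  ∀ φ ∈ S, MuForm.neg φ ∈ S

/-- `Σ` is closed under `⋄̇`. -/
def DotDiaClosed {P : Type} (S : Set (MuForm P)) : Prop :=
  ∀ φ ∈ S, dotDia φ ∈ S

/-- A cluster: a set of worlds any two of which are related by `⊑`. -/
def IsCluster {W P : Type} (M : KModel W P) (C : Set W) : Prop :=
  ∀ u ∈ C, ∀ v ∈ C, M.rle u v

/-- `C_w`, the union of all clusters containing `w`. -/
def clusterOf {W P : Type} (M : KModel W P) (w : W) : Set W :=
  ⋃₀ {C : Set W | IsCluster M C ∧ w ∈ C}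

/-- `A ≺ B` iff every `v ∈ B` lies strictly above some `u ∈ A`. -/
def Prec {W P : Type} (M : KModel W P) (A B : Set W) : Prop :=
  ∀ v ∈ B, ∃ u ∈ A, M.rel u v ∧ ¬ M.rel v u

/-- `A ⪯ B` iff every `v ∈ B` lies `⊑`-above some `u ∈ A`. -/
def PrecEq {W P : Type} (M : KModel W P) (A B : Set W) : Prop :=
  ∀ v ∈ B, ∃ u ∈ A, M.rle u v

/-- `A↑*`, the reflexive upset of `A`. -/
def upStar {W P : Type} (M : KModel W P) (A : Set W) : Set W :=
  A ∪ {v | ∃ u ∈ A, M.rel u v}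

/-- `w` is `Σ`-final in `M`. -/
def FinalPt {W P : Type} (M : KModel W P) (S : Set (MuForm P)) (w : W) : Prop :=
  ∃ φ ∈ S, M.Sat w φ ∧ ∀ u, M.rel w u → M.Sat u φ → M.rel u w

/-- `M^Σ`, the largest `Σ`-final subset of `M` (the set of all `Σ`-final points). -/
def finalSet {W P : Type} (M : KModel W P) (S : Set (MuForm P)) : Set W :=
  {w | FinalPt M S w}

/-- `DepthGe M Σ n A` says `dpt_Σ^M(A) ≥ n`: there is a `≺`-increasing chain of `n`
nonempty subsets of `M^Σ` above `A`. -/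
def DepthGe {W P : Type} (M : KModel W P) (S : Set (MuForm P)) : Nat → Set W → Prop
  | 0, _ => True
  | n + 1, A => ∃ B : Set W, B.Nonempty ∧ B ⊆ finalSet M S ∧ Prec M A B ∧ DepthGe M S n B

/-- `dpt_Σ^M(A) = n`. -/
def depthEq {W P : Type} (M : KModel W P) (S : Set (MuForm P)) (A : Set W) (n : Nat) : Prop :=
  DepthGe M S n A ∧ ¬ DepthGe M S (n + 1) A

/-- `w ⊨_M ⟨n⟩̄φ`: some `Σ`-final `v ⊒ w` of `Σ`-depth `n` satisfies `φ`. -/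
def BarSat {W P : Type} (M : KModel W P) (S : Set (MuForm P)) (w : W) (n : Nat)
    (φ : MuForm P) : Prop :=
  ∃ v, FinalPt M S v ∧ M.rle w v ∧ depthEq M S {v} n ∧ M.Sat v φ

/-- Propositional constants occurring in a formula. -/
def MuForm.props {P : Type} : MuForm P → Set P
  | .tru => ∅
  | .var _ => ∅
  | .prop p => {p}
  | .nprop p => {p}
  | .fvar _ ψ => ψ.props
  | .nfvar _ ψ => ψ.props
  | .and φ ψ => φ.props ∪ ψ.props
  | .or φ ψ => φ.props ∪ ψ.props
  | .dia φ => φ.props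
  | .box φ => φ.props
  | .nu φ => φ.props
  | .mu φ => φ.props

/-- The propositional constants occurring in some formula of `Σ`. -/
def SigmaProps {P : Type} (S : Set (MuForm P)) : Set P :=
  {p | ∃ φ ∈ S, p ∈ φ.props}

end TangledMu
namespace TangledMu

/-- Finite disjunction (`⊥ := μx.x` for the empty disjunction). -/
def bigOr {P : Type} : List (MuForm P) → MuForm P
  | [] => .mu (.var 0)
  | [φ] => φ
  | φ :: ψ :: l => .or φ (bigOr (ψ :: l))

/-- Finite conjunction. -/
def bigAnd {P : Type} : List (MuForm P) → MuForm P
  | [] => .tru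
  | [φ] => φ
  | φ :: ψ :: l => .and φ (bigAnd (ψ :: l))

/-- The `i`-th disjunct `⋄̇(φ_i ∧ x) ∧ ⋀_{j ≠ i} ◇(φ_j ∧ x)` of the tangle. -/
def tangleDisj {P : Type} (Γ : List (MuForm P)) (i : Nat) : MuForm P :=
  .and (dotDia (.and (Γ.getD i .tru) (.var 0)))
    (bigAnd ((Γ.eraseIdx i).map fun ψ => .dia (.and ψ (.var 0))))

/-- Gougeon's tangle `◇^∞Γ := νx.⋁_{φ_i ∈ Γ} (⋄̇(φ_i ∧ x) ∧ ⋀_{j ≠ i} ◇(φ_j ∧ x))`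
of a finite multiset (list) of formulas. -/
def tangleForm {P : Type} (Γ : List (MuForm P)) : MuForm P :=
  .nu (bigOr ((List.range Γ.length).map (tangleDisj Γ)))

/-- The tangle language `L_◇^∞`, generated from `⊤` and propositional constants by
`¬`, `∧`, `∨`, `◇`, `□` and `◇^∞Γ` for finite `Γ ⊆ L_◇^∞`, viewed as a fragment of `L_μ`. -/
inductive IsTangle {P : Type} : MuForm P → Prop
  | tru : IsTangle .tru
  | prop (p : P) : IsTangle (.prop p)
  | neg {φ} : IsTangle φ → IsTangle (MuForm.neg φ)
  | and {φ ψ} : IsTangle φ → IsTangle ψ → IsTangle (.and φ ψ)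
  | or {φ ψ} : IsTangle φ → IsTangle ψ → IsTangle (.or φ ψ)
  | dia {φ} : IsTangle φ → IsTangle (.dia φ)
  | box {φ} : IsTangle φ → IsTangle (.box φ)
  | tangle (Γ : List (MuForm P)) : (∀ φ ∈ Γ, IsTangle φ) → IsTangle (tangleForm Γ)

/-- All free de Bruijn fixed-point variables of the formula are `< k`
(for `k = 0`: no free fixed-point variables). -/
def MuForm.varsBelow {P : Type} : MuForm P → Nat → Prop
  | .tru, _ => True
  | .var n, k => n < k
  | .prop _, _ => True
  | .nprop _, _ => True
  | .fvar _ ψ, _ => ψ.varsBelow 1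
  | .nfvar _ ψ, _ => ψ.varsBelow 1
  | .and φ ψ, k => φ.varsBelow k ∧ ψ.varsBelow k
  | .or φ ψ, k => φ.varsBelow k ∧ ψ.varsBelow k
  | .dia φ, k => φ.varsBelow k
  | .box φ, k => φ.varsBelow k
  | .nu φ, k => φ.varsBelow (k + 1)
  | .mu φ, k => φ.varsBelow (k + 1)

/-- The formula is a genuine `L_μ` formula: it contains no named variables `x_ψ`. -/
def MuForm.noNames {P : Type} : MuForm P → Prop
  | .fvar _ _ => False
  | .nfvar _ _ => False
  | .and φ ψ => φ.noNames ∧ ψ.noNames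
  | .or φ ψ => φ.noNames ∧ ψ.noNames
  | .dia φ => φ.noNames
  | .box φ => φ.noNames
  | .nu φ => φ.noNames
  | .mu φ => φ.noNames
  | _ => True

end TangledMu
namespace TangledMu

open FirstOrder

/-- The first-order language with one binary relation symbol (for `⊏`) and one unary
predicate symbol for each propositional variable in `P`. -/
def folLang (P : Type) : FirstOrder.Language where
  Functions := fun _ => Empty
  Relations := fun n =>
    match n with
    | 1 => P
    | 2 => PUnit
    | _ => Empty

/-- A Kripke model viewed as a first-order structure: the binary relation symbol is
interpreted as `⊏` and the unary predicate symbol `P_p` as `‖p‖`. -/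
def folStr {W P : Type} (M : KModel W P) : (folLang P).Structure W where
  funMap {n} f _ := Empty.elim f
  RelMap {n} :=
    match n with
    | 0 => fun r _ => Empty.elim r
    | 1 => fun p x => x 0 ∈ M.val p
    | 2 => fun _ x => M.rel (x 0) (x 1)
    | _ + 3 => fun r _ => Empty.elim r

/-- `M ⊨ θ(w)`: realization of a first-order formula with one free variable in a
Kripke model viewed as a first-order structure. -/
def FOSat {W P : Type} (M : KModel W P) (θ : (folLang P).Formula (Fin 1)) (w : W) : Prop :=
  @FirstOrder.Language.Formula.Realize (folLang P) W (folStr M) (Fin 1) θ (fun _ => w)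

end TangledMu
namespace TangledMu

/-- A `wK4` model is path-finite if the ordering `≺` on nonempty clusters is
conversely well-founded (there is no infinite `≺`-increasing chain of clusters). -/
def PathFinite {W P : Type} (M : KModel W P) : Prop :=
  WellFounded (fun B A : Set W =>
    IsCluster M A ∧ IsCluster M B ∧ A.Nonempty ∧ B.Nonempty ∧ Prec M A B)

end TangledMu

/-!
Connectives, `◇` and `□` translate directly.  For a tangle, `w ⊨ ◇^∞Γ` iff `w` lies in some
`X ⊆ tangleOp M A X`, where `A i = ‖Γ i‖`.  In a path-finite `wK4` model `w` sees a `v ∈ X`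
that is maximal in `X` up to its cluster `C_v`, and `X ∩ C_v` is again post-fixed.  Distinct
points of a cluster are `⊏`-related, so two points of each `A i ∩ X ∩ C_v`, distinct whenever
possible, form a post-fixed set, which stays post-fixed when `w` is added.  Hence
`w ⊨ ◇^∞Γ` iff some set of at most `2|Γ| + 1` points containing `w` is post-fixed, and that is
a first-order condition.
-/

namespace TangledMu

variable {W P : Type}

section Semantics

variable (M : KModel W P)

theorem sat_mu_var_zero (e : ℕ → Set W) : (MuForm.mu (.var 0) : MuForm P).sat M e = ∅ :=
  Set.subset_empty_iff.mp (Set.sInter_subset_of_mem (Set.Subset.refl ∅))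

theorem mem_sat_bigOr (l : List (MuForm P)) (e : ℕ → Set W) (w : W) :
    w ∈ (bigOr l).sat M e ↔ ∃ φ ∈ l, w ∈ φ.sat M e := by
  induction l using bigOr.induct with
  | case1 => simp [bigOr, sat_mu_var_zero]
  | case2 φ => simp [bigOr]
  | case3 φ ψ l ih => simp [bigOr, MuForm.sat, ih]

theorem mem_sat_bigAnd (l : List (MuForm P)) (e : ℕ → Set W) (w : W) :
    w ∈ (bigAnd l).sat M e ↔ ∀ φ ∈ l, w ∈ φ.sat M e := by
  induction l using bigAnd.induct with
  | case1 => simp [bigAnd, MuForm.sat]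
  | case2 φ => simp [bigAnd]
  | case3 φ ψ l ih => simp [bigAnd, MuForm.sat, ih]

theorem mem_sat_dotDia (φ : MuForm P) (e : ℕ → Set W) (w : W) :
    w ∈ (dotDia φ).sat M e ↔ ∃ u, M.rle w u ∧ u ∈ φ.sat M e := by
  simp [dotDia, MuForm.sat, KModel.rle]

end Semantics

section Negation

theorem MuForm.noNames_neg {φ : MuForm P} (h : φ.noNames) : φ.neg.noNames := by
  induction φ with
  | and _ _ ih₁ ih₂ | or _ _ ih₁ ih₂ => exact ⟨ih₁ h.1, ih₂ h.2⟩
  | dia _ ih | box _ ih | nu _ ih | mu _ ih => exact ih h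
  | _ => trivial

theorem envCons_compl (X : Set W) (e : ℕ → Set W) :
    (fun n => (envCons Xᶜ e n)ᶜ) = envCons X (fun n => (e n)ᶜ) := by
  funext n
  cases n <;> simp [envCons]

theorem MuForm.sat_neg (M : KModel W P) {φ : MuForm P} (hφ : φ.noNames) (e : ℕ → Set W) :
    φ.neg.sat M (fun n => (e n)ᶜ) = (φ.sat M e)ᶜ := by
  induction φ generalizing e with
  | tru => simp [MuForm.neg, sat_mu_var_zero, MuForm.sat]
  | var n => rfl
  | prop p => rfl
  | nprop p => exact (compl_compl _).symm
  | fvar | nfvar => exact hφ.elim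
  | and φ ψ ih₁ ih₂ =>
    simp only [MuForm.neg, MuForm.sat, ih₁ hφ.1, ih₂ hφ.2, Set.compl_inter]
  | or φ ψ ih₁ ih₂ =>
    simp only [MuForm.neg, MuForm.sat, ih₁ hφ.1, ih₂ hφ.2, Set.compl_union]
  | dia φ ih =>
    ext w
    simp [MuForm.neg, MuForm.sat, ih hφ]
  | box φ ih =>
    ext w
    simp [MuForm.neg, MuForm.sat, ih hφ]
  | nu φ ih =>
    simp only [MuForm.neg, MuForm.sat, Set.compl_sUnion]
    have key : ∀ X, φ.neg.sat M (envCons X fun n => (e n)ᶜ) = (φ.sat M (envCons Xᶜ e))ᶜ :=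
      fun X => by rw [← envCons_compl, ih hφ]
    congr 1
    ext X
    rw [Set.mem_compl_image, Set.mem_ofPred_eq, Set.mem_ofPred_eq, key, Set.compl_subset_comm]
  | mu φ ih =>
    simp only [MuForm.neg, MuForm.sat, Set.compl_sInter]
    have key : ∀ X, φ.neg.sat M (envCons X fun n => (e n)ᶜ) = (φ.sat M (envCons Xᶜ e))ᶜ :=
      fun X => by rw [← envCons_compl, ih hφ]
    congr 1
    ext X
    rw [Set.mem_compl_image, Set.mem_ofPred_eq, Set.mem_ofPred_eq, key, Set.subset_compl_comm]

end Negation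

section TangleOperator

variable (M : KModel W P)

/-- The truth set of `⋁ᵢ (⋄̇(A i ∧ x) ∧ ⋀_{j ≠ i} ◇(A j ∧ x))` when `x` is read as `X`. -/
def tangleOp {ι : Type} (A : ι → Set W) (X : Set W) : Set W :=
  {x | ∃ i, (∃ u ∈ X, M.rle x u ∧ u ∈ A i) ∧ ∀ j ≠ i, ∃ u ∈ X, M.rel x u ∧ u ∈ A j}

variable {M}

theorem tangleOp_mono {ι : Type} {A : ι → Set W} {X Y : Set W} (h : X ⊆ Y) :
    tangleOp M A X ⊆ tangleOp M A Y := by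
  rintro x ⟨i, ⟨u, hu, hxu⟩, hj⟩
  exact ⟨i, ⟨u, h hu, hxu⟩, fun j hji => (hj j hji).imp fun v hv => ⟨h hv.1, hv.2⟩⟩

theorem _root_.List.forall_mem_eraseIdx_iff {α : Type*} (l : List α) (i : Fin l.length)
    (p : α → Prop) : (∀ a ∈ l.eraseIdx i, p a) ↔ ∀ j : Fin l.length, j ≠ i → p l[j] := by
  simp only [List.mem_eraseIdx_iff_getElem]
  constructor
  · exact fun h j hji => h _ ⟨j, j.2, Fin.val_ne_of_ne hji, rfl⟩
  · rintro h _ ⟨j, hj, hji, rfl⟩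
    exact h ⟨j, hj⟩ (Fin.ne_of_val_ne hji)

variable (M)

theorem mem_sat_tangleDisj (Γ : List (MuForm P)) (i : Fin Γ.length) (E : ℕ → Set W)
    (w : W) : w ∈ (tangleDisj Γ i).sat M E ↔
      (∃ u ∈ E 0, M.rle w u ∧ u ∈ Γ[i].sat M E) ∧
        ∀ j : Fin Γ.length, j ≠ i → ∃ u ∈ E 0, M.rel w u ∧ u ∈ Γ[j].sat M E := by
  simp only [tangleDisj, MuForm.sat, Set.mem_inter_iff, mem_sat_dotDia, mem_sat_bigAnd,
    List.forall_mem_map, List.forall_mem_eraseIdx_iff, List.getD_eq_getElem _ _ i.2,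
    Set.mem_ofPred_eq, Fin.getElem_fin]
  simp only [and_comm (a := _ ∈ E 0), and_assoc]

theorem sat_tangleBody (Γ : List (MuForm P)) (E : ℕ → Set W) :
    (bigOr ((List.range Γ.length).map (tangleDisj Γ))).sat M E =
      tangleOp M (fun i : Fin Γ.length => Γ[i].sat M E) (E 0) := by
  ext w
  simp only [mem_sat_bigOr, List.mem_map, List.mem_range, exists_exists_and_eq_and]
  constructor
  · rintro ⟨i, hi, hw⟩
    exact ⟨⟨i, hi⟩, (mem_sat_tangleDisj M Γ ⟨i, hi⟩ E w).1 hw⟩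
  · rintro ⟨i, hw⟩
    exact ⟨i, i.2, (mem_sat_tangleDisj M Γ i E w).2 hw⟩

theorem sat_tangleForm (Γ : List (MuForm P)) (e : ℕ → Set W) :
    (tangleForm Γ).sat M e =
      ⋃₀ {X | X ⊆ tangleOp M (fun i : Fin Γ.length => Γ[i].sat M (envCons X e)) X} := by
  simp only [tangleForm, MuForm.sat, sat_tangleBody]
  rfl

end TangleOperator

section TangleFormulas

theorem noNames_bigOr {l : List (MuForm P)} (h : ∀ φ ∈ l, φ.noNames) :
    (bigOr l).noNames := by
  induction l using bigOr.induct with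
  | case1 => trivial
  | case2 φ => exact h φ (List.mem_singleton_self φ)
  | case3 φ ψ l ih =>
    exact ⟨h φ List.mem_cons_self, ih fun χ hχ => h χ (List.mem_cons_of_mem _ hχ)⟩

theorem noNames_bigAnd {l : List (MuForm P)} (h : ∀ φ ∈ l, φ.noNames) :
    (bigAnd l).noNames := by
  induction l using bigAnd.induct with
  | case1 => trivial
  | case2 φ => exact h φ (List.mem_singleton_self φ)
  | case3 φ ψ l ih =>
    exact ⟨h φ List.mem_cons_self, ih fun χ hχ => h χ (List.mem_cons_of_mem _ hχ)⟩

theorem noNames_tangleForm {Γ : List (MuForm P)} (h : ∀ φ ∈ Γ, φ.noNames) :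
    (tangleForm Γ).noNames := by
  refine noNames_bigOr fun φ hφ => ?_
  obtain ⟨i, -, rfl⟩ := List.mem_map.mp hφ
  have hi : (Γ.getD i .tru).noNames := by
    rw [List.getD_eq_getElem?_getD]
    cases hget : Γ[i]? with
    | none => trivial
    | some φ => exact h φ (List.mem_of_getElem? hget)
  refine ⟨⟨⟨hi, trivial⟩, hi, trivial⟩, noNames_bigAnd fun χ hχ => ?_⟩
  obtain ⟨ψ, hψ, rfl⟩ := List.mem_map.mp hχ
  exact ⟨h ψ (List.mem_of_mem_eraseIdx hψ), trivial⟩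

theorem IsTangle.noNames {φ : MuForm P} (h : IsTangle φ) : φ.noNames := by
  induction h with
  | tru | prop => trivial
  | neg _ ih => exact MuForm.noNames_neg ih
  | and _ _ ih₁ ih₂ | or _ _ ih₁ ih₂ => exact ⟨ih₁, ih₂⟩
  | dia _ ih | box _ ih => exact ih
  | tangle Γ _ ih => exact noNames_tangleForm ih

theorem IsTangle.sat_eq {φ : MuForm P} (h : IsTangle φ) (M : KModel W P) (e e' : ℕ → Set W) :
    φ.sat M e = φ.sat M e' := by
  induction h generalizing e e' with
  | tru | prop => rfl
  | @neg φ hφ ih =>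
    rw [← compl_compl e, ← compl_compl e']
    exact (MuForm.sat_neg M hφ.noNames _).trans
      ((congrArg _ (ih _ _)).trans (MuForm.sat_neg M hφ.noNames _).symm)
  | and _ _ ih₁ ih₂ | or _ _ ih₁ ih₂ => simp only [MuForm.sat, ih₁ e e', ih₂ e e']
  | dia _ ih | box _ ih => simp only [MuForm.sat, ih e e']
  | tangle Γ _ ih =>
    have hΓ : ∀ X, (fun i : Fin Γ.length => Γ[i].sat M (envCons X e)) =
        fun i => Γ[i].sat M (envCons X e') :=
      fun X => funext fun i => ih _ (List.getElem_mem _) _ _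
    simp only [sat_tangleForm, hΓ]

theorem IsTangle.sat_neg_iff {φ : MuForm P} (h : IsTangle φ) (M : KModel W P) (w : W) :
    M.Sat w φ.neg ↔ ¬ M.Sat w φ := by
  have hneg := MuForm.sat_neg M h.noNames (fun _ => ∅)
  rw [h.neg.sat_eq M _ (fun _ => ∅)] at hneg
  exact Set.ext_iff.mp hneg w

theorem IsTangle.sat_tangleForm_iff {Γ : List (MuForm P)} (hΓ : ∀ φ ∈ Γ, IsTangle φ)
    (M : KModel W P) (w : W) :
    M.Sat w (tangleForm Γ) ↔
      ∃ X, X ⊆ tangleOp M (fun i : Fin Γ.length => {u | M.Sat u Γ[i]}) X ∧ w ∈ X := by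
  have hA : ∀ X, (fun i : Fin Γ.length => Γ[i].sat M (envCons X fun _ => ∅)) =
      fun i => {u | M.Sat u Γ[i]} :=
    fun X => funext fun i => (hΓ _ (List.getElem_mem _)).sat_eq M _ _
  simp only [KModel.Sat, sat_tangleForm, hA, Set.mem_sUnion, Set.mem_ofPred_eq]

end TangleFormulas

section Clusters

variable {M : KModel W P}

theorem KModel.rle_trans (hwk : WeaklyTransitive M.rel) {a b c : W} (hab : M.rle a b)
    (hbc : M.rle b c) : M.rle a c := by
  rcases hab with rfl | hab
  · exact hbc
  rcases hbc with rfl | hbc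
  · exact Or.inr hab
  by_cases hac : a = c
  · exact Or.inl hac
  · exact Or.inr (hwk a b c hac hab hbc)

theorem mem_clusterOf_iff {v u : W} : u ∈ clusterOf M v ↔ M.rle v u ∧ M.rle u v := by
  constructor
  · rintro ⟨C, ⟨hC, hvC⟩, huC⟩
    exact ⟨hC v hvC u huC, hC u huC v hvC⟩
  · intro h
    refine ⟨{v, u}, ⟨?_, Set.mem_insert v _⟩, Set.mem_insert_of_mem v rfl⟩
    rintro a (rfl | rfl) b (rfl | rfl)
    exacts [Or.inl rfl, h.1, h.2, Or.inl rfl]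

theorem mem_clusterOf_self (v : W) : v ∈ clusterOf M v :=
  mem_clusterOf_iff.mpr ⟨Or.inl rfl, Or.inl rfl⟩

theorem isCluster_clusterOf (hwk : WeaklyTransitive M.rel) (v : W) :
    IsCluster M (clusterOf M v) := fun _ ha _ hb =>
  M.rle_trans hwk (mem_clusterOf_iff.mp ha).2 (mem_clusterOf_iff.mp hb).1

theorem prec_clusterOf (hwk : WeaklyTransitive M.rel) {v u : W} (hvu : M.rle v u)
    (huv : ¬ M.rle u v) : Prec M (clusterOf M v) (clusterOf M u) := by
  intro z hz
  have huz := (mem_clusterOf_iff.mp hz).1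
  refine ⟨v, mem_clusterOf_self v, ?_, fun hzv => ?_⟩
  · rcases M.rle_trans hwk hvu huz with rfl | hvz
    · exact absurd huz huv
    · exact hvz
  · exact huv (M.rle_trans hwk huz (Or.inr hzv))

theorem exists_rle_maximal (hwk : WeaklyTransitive M.rel) (hpf : PathFinite M) {S : Set W}
    {w : W} (hw : w ∈ S) :
    ∃ v ∈ S, M.rle w v ∧ ∀ u ∈ S, M.rle v u → M.rle u v := by
  obtain ⟨_, ⟨v, hvS, hwv, rfl⟩, hmin⟩ := hpf.has_min
    {C | ∃ v ∈ S, M.rle w v ∧ C = clusterOf M v} ⟨_, w, hw, Or.inl rfl, rfl⟩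
  refine ⟨v, hvS, hwv, fun u huS hvu => ?_⟩
  by_contra huv
  exact hmin _ ⟨u, huS, M.rle_trans hwk hwv hvu, rfl⟩
    ⟨isCluster_clusterOf hwk v, isCluster_clusterOf hwk u,
      ⟨v, mem_clusterOf_self v⟩, ⟨u, mem_clusterOf_self u⟩, prec_clusterOf hwk hvu huv⟩

end Clusters

section FiniteWitnesses

variable {M : KModel W P} {ι : Type} {A : ι → Set W}

theorem exists_pair_rel_of_isCluster {C B : Set W} (hC : IsCluster M C) (hBC : B ⊆ C)
    (hB : B.Nonempty) :
    ∃ a ∈ B, ∃ b ∈ B, ∀ z ∈ C, (∃ u ∈ B, M.rel z u) → M.rel z a ∨ M.rel z b := by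
  by_cases hsub : ∃ a ∈ B, ∃ b ∈ B, a ≠ b
  · obtain ⟨a, ha, b, hb, hab⟩ := hsub
    refine ⟨a, ha, b, hb, fun z hz _ => ?_⟩
    rcases hC z hz a (hBC ha) with rfl | hza
    · exact Or.inr ((hC z hz b (hBC hb)).resolve_left hab)
    · exact Or.inl hza
  · obtain ⟨a, ha⟩ := hB
    refine ⟨a, ha, a, ha, fun z _ ⟨u, hu, hzu⟩ => Or.inl ?_⟩
    rwa [of_not_not fun hua => hsub ⟨u, hu, a, ha, hua⟩] at hzu

theorem mem_tangleOp_inter {X C : Set W} (hX : X ⊆ tangleOp M A X) {z : W} (hz : z ∈ X)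
    (hC : ∀ u ∈ X, M.rle z u → u ∈ C) : z ∈ tangleOp M A (X ∩ C) := by
  obtain ⟨i, ⟨u, hu, hzu, hui⟩, hj⟩ := hX hz
  refine ⟨i, ⟨u, ⟨hu, hC u hu hzu⟩, hzu, hui⟩, fun j hji => ?_⟩
  obtain ⟨u, hu, hzu, huj⟩ := hj j hji
  exact ⟨u, ⟨hu, hC u hu (Or.inr hzu)⟩, hzu, huj⟩

theorem exists_finite_subset_tangleOp_of_isCluster {D : Set W} (hD : IsCluster M D)
    (hpost : D ⊆ tangleOp M A D) (hne : D.Nonempty) :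
    ∃ f : ι × Bool → W, Set.range f ⊆ D ∧ Set.range f ⊆ tangleOp M A (Set.range f) := by
  have hA : ∀ j, (A j ∩ D).Nonempty := by
    obtain ⟨d, hd⟩ := hne
    obtain ⟨i, ⟨u, hu, -, hui⟩, hj⟩ := hpost hd
    intro j
    by_cases hji : j = i
    · exact hji ▸ ⟨u, hui, hu⟩
    · obtain ⟨u, hu, -, huj⟩ := hj j hji
      exact ⟨u, huj, hu⟩
  choose a ha b hb hab using fun j =>
    exists_pair_rel_of_isCluster hD Set.inter_subset_right (hA j)
  let f : ι × Bool → W := fun p => cond p.2 (a p.1) (b p.1)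
  have hfA : ∀ p, f p ∈ A p.1 ∩ D := fun ⟨j, t⟩ => by cases t <;> simp [f, ha, hb]
  refine ⟨f, Set.range_subset_iff.mpr fun p => (hfA p).2,
    Set.range_subset_iff.mpr fun p => ?_⟩
  obtain ⟨i, -, hj⟩ := hpost (hfA p).2
  refine ⟨i, ⟨f (i, true), ⟨_, rfl⟩, hD _ (hfA p).2 _ (hfA (i, true)).2, (hfA (i, true)).1⟩,
    fun j hji => ?_⟩
  obtain ⟨u, huD, hzu, huj⟩ := hj j hji
  rcases hab j (f p) (hfA p).2 ⟨u, ⟨huj, huD⟩, hzu⟩ with h | h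
  · exact ⟨f (j, true), ⟨_, rfl⟩, h, (hfA (j, true)).1⟩
  · exact ⟨f (j, false), ⟨_, rfl⟩, h, (hfA (j, false)).1⟩

theorem insert_subset_tangleOp {Y : Set W} (hY : Y ⊆ tangleOp M A Y) {y w : W} (hy : y ∈ Y)
    (hw : ∀ u ∈ Y, M.rle w u) : insert w Y ⊆ tangleOp M A (insert w Y) := by
  refine Set.insert_subset_iff.mpr ⟨?_, hY.trans (tangleOp_mono (Set.subset_insert w Y))⟩
  by_cases hwY : w ∈ Y
  · exact tangleOp_mono (Set.subset_insert w Y) (hY hwY)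
  have hrel : ∀ u ∈ Y, M.rel w u := fun u hu =>
    (hw u hu).resolve_left fun hwu => hwY (hwu ▸ hu)
  obtain ⟨i, ⟨u, hu, -, hui⟩, hj⟩ := hY hy
  refine tangleOp_mono (Set.subset_insert w Y) ⟨i, ⟨u, hu, Or.inr (hrel u hu), hui⟩,
    fun j hji => ?_⟩
  obtain ⟨u, hu, -, huj⟩ := hj j hji
  exact ⟨u, hu, hrel u hu, huj⟩

theorem exists_subset_tangleOp_iff_finite (hwk : WeaklyTransitive M.rel) (hpf : PathFinite M)
    (w : W) :
    (∃ X, X ⊆ tangleOp M A X ∧ w ∈ X) ↔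
      ∃ y : Option (ι × Bool) → W, Set.range y ⊆ tangleOp M A (Set.range y) ∧
        w ∈ Set.range y := by
  refine ⟨fun ⟨X, hX, hw⟩ => ?_, fun ⟨y, hy, hw⟩ => ⟨_, hy, hw⟩⟩
  obtain ⟨v, hvX, hwv, hmax⟩ := exists_rle_maximal hwk hpf hw
  have hD : X ∩ clusterOf M v ⊆ tangleOp M A (X ∩ clusterOf M v) := by
    rintro z ⟨hzX, hzC⟩
    have hvz := (mem_clusterOf_iff.mp hzC).1
    exact mem_tangleOp_inter hX hzX fun u huX hzu =>
      mem_clusterOf_iff.mpr ⟨M.rle_trans hwk hvz hzu, hmax u huX (M.rle_trans hwk hvz hzu)⟩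
  have hvD : v ∈ X ∩ clusterOf M v := ⟨hvX, mem_clusterOf_self v⟩
  obtain ⟨f, hfD, hf⟩ := exists_finite_subset_tangleOp_of_isCluster
    (fun a ha b hb => isCluster_clusterOf hwk v a ha.2 b hb.2) hD ⟨v, hvD⟩
  obtain ⟨i, -⟩ := hD hvD
  refine ⟨fun o => o.elim w f, ?_, ⟨none, rfl⟩⟩
  rw [Option.range_elim]
  exact insert_subset_tangleOp hf (Set.mem_range_self (i, true)) fun u hu =>
    M.rle_trans hwk hwv (mem_clusterOf_iff.mp (hfD hu).2).1

end FiniteWitnesses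

open FirstOrder Language

noncomputable section FirstOrder

def relFO {α : Type} (a b : α) : (folLang P).Formula α :=
  Relations.formula₂ (PUnit.unit : (folLang P).Relations 2) (Term.var a) (Term.var b)

def propFO (p : P) : (folLang P).Formula (Fin 1) :=
  Relations.formula₁ (p : (folLang P).Relations 1) (Term.var 0)

def diaFO (θ : (folLang P).Formula (Fin 1)) : (folLang P).Formula (Fin 1) :=
  Formula.iExs Unit (relFO (Sum.inl 0) (Sum.inr ()) ⊓ θ.relabel fun _ => Sum.inr ())

def tangleFO {ι : Type} [Finite ι] (θ : ι → (folLang P).Formula (Fin 1)) :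
    (folLang P).Formula (Fin 1) :=
  Formula.iExs (Option (ι × Bool)) <|
    (Formula.iInf fun l => Formula.iSup fun i =>
      (Formula.iSup fun l' =>
          ((Term.var (Sum.inr l)).equal (Term.var (Sum.inr l')) ⊔
              relFO (Sum.inr l) (Sum.inr l')) ⊓
            (θ i).relabel fun _ => Sum.inr l') ⊓
        Formula.iInf fun j : {j // j ≠ i} => Formula.iSup fun l' =>
          relFO (Sum.inr l) (Sum.inr l') ⊓ (θ j).relabel fun _ => Sum.inr l') ⊓
    Formula.iSup fun l => (Term.var (Sum.inr l)).equal (Term.var (Sum.inl 0))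

variable (M : KModel W P)

theorem realize_relFO {α : Type} (a b : α) (v : α → W) :
    @Formula.Realize (folLang P) W (folStr M) α (relFO a b) v ↔ M.rel (v a) (v b) :=
  Iff.rfl

theorem realize_relabel_const {α : Type} (θ : (folLang P).Formula (Fin 1)) (a : α)
    (v : α → W) :
    @Formula.Realize (folLang P) W (folStr M) α (θ.relabel fun _ => a) v ↔ FOSat M θ (v a) :=
  let _ := folStr M
  Formula.realize_relabel

theorem foSat_not (θ : (folLang P).Formula (Fin 1)) (w : W) :
    FOSat M θ.not w ↔ ¬ FOSat M θ w :=
  let _ := folStr M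
  Formula.realize_not

theorem foSat_propFO (p : P) (w : W) : FOSat M (propFO p) w ↔ w ∈ M.val p := Iff.rfl

theorem foSat_diaFO (θ : (folLang P).Formula (Fin 1)) (w : W) :
    FOSat M (diaFO θ) w ↔ ∃ u, M.rel w u ∧ FOSat M θ u := by
  let _ := folStr M
  simp only [FOSat, diaFO, Formula.realize_iExs, Formula.realize_inf, realize_relFO,
    realize_relabel_const]
  exact ⟨fun ⟨u, h⟩ => ⟨u (), h⟩, fun ⟨u, h⟩ => ⟨fun _ => u, h⟩⟩

theorem foSat_tangleFO {ι : Type} [Finite ι] (θ : ι → (folLang P).Formula (Fin 1)) (w : W) :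
    FOSat M (tangleFO θ) w ↔
      ∃ y : Option (ι × Bool) → W,
        Set.range y ⊆ tangleOp M (fun i => {u | FOSat M (θ i) u}) (Set.range y) ∧
          w ∈ Set.range y := by
  let _ := folStr M
  simp only [FOSat, tangleFO, Formula.realize_iExs, Formula.realize_inf, Formula.realize_iInf,
    Formula.realize_iSup, Formula.realize_sup, Formula.realize_equal, Term.realize_var,
    realize_relFO, realize_relabel_const, Sum.elim_inr, Sum.elim_inl, Set.range_subset_iff,
    tangleOp, Set.mem_ofPred_eq, Subtype.forall, Set.mem_range, exists_exists_eq_and,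
    KModel.rle]

end FirstOrder

section Definability

def FirstOrderDefinable (ψ : MuForm P) : Prop :=
  ∃ θ : (folLang P).Formula (Fin 1),
    ∀ (W : Type) (M : KModel W P), WeaklyTransitive M.rel → PathFinite M →
      ∀ w : W, M.Sat w ψ ↔ FOSat M θ w

theorem firstOrderDefinable_tru : FirstOrderDefinable (.tru : MuForm P) :=
  ⟨⊤, fun W M _ _ w => by
    let _ := folStr M
    exact iff_of_true (Set.mem_univ w) (Formula.realize_top.mpr trivial)⟩

theorem firstOrderDefinable_prop (p : P) : FirstOrderDefinable (.prop p) :=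
  ⟨propFO p, fun _ M _ _ w => (foSat_propFO M p w).symm⟩

namespace FirstOrderDefinable

variable {φ ψ : MuForm P}

theorem neg (hφ : IsTangle φ) (h : FirstOrderDefinable φ) : FirstOrderDefinable φ.neg := by
  obtain ⟨θ, hθ⟩ := h
  refine ⟨θ.not, fun W M hwk hpf w => ?_⟩
  rw [foSat_not, hφ.sat_neg_iff, hθ W M hwk hpf]

theorem and (hφ : FirstOrderDefinable φ) (hψ : FirstOrderDefinable ψ) :
    FirstOrderDefinable (.and φ ψ) := by
  obtain ⟨θ₁, h₁⟩ := hφ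
  obtain ⟨θ₂, h₂⟩ := hψ
  refine ⟨θ₁ ⊓ θ₂, fun W M hwk hpf w => ?_⟩
  let _ := folStr M
  exact (and_congr (h₁ W M hwk hpf w) (h₂ W M hwk hpf w)).trans Formula.realize_inf.symm

theorem or (hφ : FirstOrderDefinable φ) (hψ : FirstOrderDefinable ψ) :
    FirstOrderDefinable (.or φ ψ) := by
  obtain ⟨θ₁, h₁⟩ := hφ
  obtain ⟨θ₂, h₂⟩ := hψ
  refine ⟨θ₁ ⊔ θ₂, fun W M hwk hpf w => ?_⟩
  let _ := folStr M
  exact (or_congr (h₁ W M hwk hpf w) (h₂ W M hwk hpf w)).trans Formula.realize_sup.symm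

theorem dia (h : FirstOrderDefinable φ) : FirstOrderDefinable (.dia φ) := by
  obtain ⟨θ, hθ⟩ := h
  refine ⟨diaFO θ, fun W M hwk hpf w => ?_⟩
  rw [foSat_diaFO]
  exact exists_congr fun u => and_congr_right fun _ => hθ W M hwk hpf u

theorem box (h : FirstOrderDefinable φ) : FirstOrderDefinable (.box φ) := by
  obtain ⟨θ, hθ⟩ := h
  refine ⟨(diaFO θ.not).not, fun W M hwk hpf w => ?_⟩
  change (∀ u, M.rel w u → M.Sat u φ) ↔ _
  simp only [foSat_not, foSat_diaFO, hθ W M hwk hpf, not_exists, not_and, not_not]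

end FirstOrderDefinable

theorem firstOrderDefinable_tangleForm {Γ : List (MuForm P)} (hΓ : ∀ φ ∈ Γ, IsTangle φ)
    (h : ∀ φ ∈ Γ, FirstOrderDefinable φ) : FirstOrderDefinable (tangleForm Γ) := by
  choose θ hθ using fun i : Fin Γ.length => h Γ[i] (List.getElem_mem _)
  refine ⟨tangleFO θ, fun W M hwk hpf w => ?_⟩
  have hA : (fun i : Fin Γ.length => {u | M.Sat u Γ[i]}) = fun i => {u | FOSat M (θ i) u} :=
    funext fun i => Set.ext fun u => hθ i W M hwk hpf u
  rw [IsTangle.sat_tangleForm_iff hΓ, exists_subset_tangleOp_iff_finite hwk hpf, foSat_tangleFO,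
    hA]

end Definability

end TangledMu

namespace TangledMu

/-- Every tangle formula is first-order definable over path-finite
`wK4` frames: for every `ψ ∈ L_◇^∞` there is a first-order formula `θ(x)` (in the
language with a binary relation symbol for `⊏` and a unary predicate for each
propositional variable) such that on every path-finite weakly transitive Kripke model
`M` and every `w ∈ M`, `w ⊨_M ψ ↔ M ⊨ θ(w)`. -/
theorem tangle_first_order_definable {P : Type} (ψ : MuForm P) (hψ : IsTangle ψ) :
    ∃ θ : (folLang P).Formula (Fin 1),
      ∀ (W : Type) (M : KModel W P), WeaklyTransitive M.rel → PathFinite M →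
        ∀ w : W, M.Sat w ψ ↔ FOSat M θ w := by
  show FirstOrderDefinable ψ
  induction hψ with
  | tru => exact firstOrderDefinable_tru
  | prop p => exact firstOrderDefinable_prop p
  | neg hφ ih => exact ih.neg hφ
  | and _ _ ih₁ ih₂ => exact ih₁.and ih₂
  | or _ _ ih₁ ih₂ => exact ih₁.or ih₂
  | dia _ ih => exact ih.dia
  | box _ ih => exact ih.box
  | tangle Γ hΓ ih => exact firstOrderDefinable_tangleForm hΓ ih

end TangledMu
end

section
/- For every finite set of formulas Σ₀ ⊆ L_μ, the closure Σ = Cl_{⋄̇, sub*, ¬}(Σ₀) — the least set containing Σ₀ and closed under applying ⋄̇, taking modified subformulas sub*, and negation — contains only finitely many formulas up to semantic equivalence over weakly transitive Kripke models (i.e., the quotient of Σ by the relation 'φ ≡ ψ iff ‖φ‖_M = ‖ψ‖_M for every weakly transitive Kripke model M' is finite). -/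
namespace TangledMu

/-- `Cl_{⋄̇, sub*, ¬}(S)`: the least set of formulas containing `S` and closed under
`⋄̇`, under modified subformulas and under negation. -/
inductive InCl {P : Type} (S : Set (MuForm P)) : MuForm P → Prop
  | base {φ} : φ ∈ S → InCl S φ
  | dot {φ} : InCl S φ → InCl S (dotDia φ)
  | sub {φ ψ} : InCl S φ → SubStep ψ φ → InCl S ψ
  | neg {φ} : InCl S φ → InCl S (MuForm.neg φ)

end TangledMu

/-!
Every formula of `Cl_{⋄̇, sub*, ¬}(Σ₀)` has the form `m ψ` with `m` a word in `⋄̇` and `⊡` and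
`ψ ∈ Cl_{sub*, ¬}(Σ₀)`: the only modified subformula of `⋄̇φ` (resp. `⊡φ`) is `φ`, and `¬` moves
through `⋄̇` and `⊡`, exchanging them. The set `Cl_{sub*, ¬}(Σ₀)` is finite: since `¬¬¬¬φ = ¬¬φ`,
it consists of the negation orbits of the formulas reachable from `Σ₀` by taking modified
subformulas of `φ, ¬φ, ¬¬φ, ¬¬¬φ`, and this step lowers the size (the named variables
`x_{νx.φ}` being atoms), so only finitely many formulas are reachable (König). Finally, on weakly
transitive frames `⋄̇` and `⊡` are idempotent and `⋄̇⊡⋄̇⊡ = ⋄̇⊡`, `⊡⋄̇⊡⋄̇ = ⊡⋄̇`, so up to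
equivalence there are only seven words.
-/

theorem Relation.finite_setOf_reflTransGen {α : Type*} {r : α → α → Prop} (f : α → ℕ)
    (hf : ∀ a b, r a b → f b < f a) (hr : ∀ a, {b | r a b}.Finite) (a : α) :
    {b | Relation.ReflTransGen r a b}.Finite := by
  induction a using (measure f).wf.induction with
  | _ a ih =>
    have hsplit : {b | Relation.ReflTransGen r a b} =
        insert a (⋃ c ∈ {c | r a c}, {b | Relation.ReflTransGen r c b}) := by
      ext b
      simp only [Set.mem_insert_iff, Set.mem_iUnion, exists_prop]
      exact Relation.ReflTransGen.cases_head_iff.trans (or_congr_left eq_comm)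
    rw [hsplit]
    exact ((hr a).biUnion fun c hc => ih c (hf a c hc)).insert a

namespace TangledMu

variable {P : Type}

namespace MuForm

/-- `⊤` has size 2 because `¬⊤ = μx.x`; a named variable `x_{νx.φ}` is an atom, so that
`φ(x_{νx.φ})` is smaller than `νx.φ`. -/
def size : MuForm P → ℕ
  | .tru => 2
  | .var _ | .prop _ | .nprop _ | .fvar _ _ | .nfvar _ _ => 1
  | .and φ ψ | .or φ ψ => φ.size + ψ.size + 1
  | .dia φ | .box φ | .nu φ | .mu φ => φ.size + 1

theorem size_neg (φ : MuForm P) : φ.neg.size = φ.size := by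
  induction φ <;> simp [neg, size, *]

theorem size_inst {t : MuForm P} (ht : t.size = 1) (φ : MuForm P) (k : ℕ) :
    (t.inst k φ).size = φ.size := by
  induction φ generalizing k with
  | var n => simp only [inst]; split_ifs <;> simp [size, ht]
  | _ => simp [inst, size, *]

theorem neg_neg_neg_neg (φ : MuForm P) : φ.neg.neg.neg.neg = φ.neg.neg := by
  induction φ <;> simp [neg, *]

def negOrbit (φ : MuForm P) : Set (MuForm P) := {φ, φ.neg, φ.neg.neg, φ.neg.neg.neg}

theorem negOrbit_finite (φ : MuForm P) : φ.negOrbit.Finite := by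
  simp [negOrbit]

theorem mem_negOrbit_self (φ : MuForm P) : φ ∈ φ.negOrbit := by
  simp [negOrbit]

theorem neg_mem_negOrbit {φ ψ : MuForm P} (h : ψ ∈ φ.negOrbit) : ψ.neg ∈ φ.negOrbit := by
  rcases h with rfl | rfl | rfl | rfl <;> simp [negOrbit, neg_neg_neg_neg]

theorem size_of_mem_negOrbit {φ ψ : MuForm P} (h : ψ ∈ φ.negOrbit) : ψ.size = φ.size := by
  rcases h with rfl | rfl | rfl | rfl <;> simp [size_neg]

end MuForm

theorem SubStep.size_lt {φ ψ : MuForm P} (h : SubStep ψ φ) : ψ.size < φ.size := by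
  cases h <;> simp [MuForm.size, dotDia, dotBox, MuForm.size_inst (t := .fvar _ _) rfl]

theorem finite_setOf_subStep (φ : MuForm P) : {ψ | SubStep ψ φ}.Finite := by
  cases φ with
  | and a b | or a b => exact (Set.toFinite {a, b}).subset fun ψ h => by cases h <;> simp
  | dia a | box a => exact (Set.finite_singleton a).subset fun ψ h => by cases h; rfl
  | nu a | mu a => exact (Set.finite_singleton _).subset fun ψ h => by cases h; rfl
  | _ => exact Set.finite_empty.subset fun ψ h => by cases h

def SubNegStep (φ ψ : MuForm P) : Prop := ∃ χ ∈ φ.negOrbit, SubStep ψ χ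

theorem SubNegStep.size_lt {φ ψ : MuForm P} (h : SubNegStep φ ψ) : ψ.size < φ.size := by
  obtain ⟨χ, hχ, hψ⟩ := h
  exact MuForm.size_of_mem_negOrbit hχ ▸ hψ.size_lt

theorem finite_setOf_subNegStep (φ : MuForm P) : {ψ | SubNegStep φ ψ}.Finite := by
  have hunion : {ψ | SubNegStep φ ψ} = ⋃ χ ∈ φ.negOrbit, {ψ | SubStep ψ χ} := by
    ext ψ
    simp [SubNegStep]
  rw [hunion]
  exact φ.negOrbit_finite.biUnion fun χ _ => finite_setOf_subStep χ

/-- `Cl_{sub*, ¬}(S)`. -/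
inductive InClSubNeg (S : Set (MuForm P)) : MuForm P → Prop
  | base {φ} : φ ∈ S → InClSubNeg S φ
  | sub {φ ψ} : InClSubNeg S φ → SubStep ψ φ → InClSubNeg S ψ
  | neg {φ} : InClSubNeg S φ → InClSubNeg S φ.neg

theorem InClSubNeg.exists_reflTransGen {S : Set (MuForm P)} {φ : MuForm P}
    (h : InClSubNeg S φ) :
    ∃ σ ∈ S, ∃ χ, Relation.ReflTransGen SubNegStep σ χ ∧ φ ∈ χ.negOrbit := by
  induction h with
  | base hφ => exact ⟨_, hφ, _, .refl, MuForm.mem_negOrbit_self _⟩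
  | sub _ hψ ih =>
    obtain ⟨σ, hσ, χ, hσχ, hφχ⟩ := ih
    exact ⟨σ, hσ, _, hσχ.tail ⟨_, hφχ, hψ⟩, MuForm.mem_negOrbit_self _⟩
  | neg _ ih =>
    obtain ⟨σ, hσ, χ, hσχ, hφχ⟩ := ih
    exact ⟨σ, hσ, χ, hσχ, MuForm.neg_mem_negOrbit hφχ⟩

theorem finite_setOf_inClSubNeg {S : Set (MuForm P)} (hS : S.Finite) :
    {φ | InClSubNeg S φ}.Finite := by
  refine (hS.biUnion fun σ _ =>
    (Relation.finite_setOf_reflTransGen MuForm.size (fun _ _ h => h.size_lt)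
      finite_setOf_subNegStep σ).biUnion fun χ _ => χ.negOrbit_finite).subset fun φ hφ => ?_
  obtain ⟨σ, hσ, χ, hσχ, hφχ⟩ := hφ.exists_reflTransGen
  simp only [Set.mem_iUnion]
  exact ⟨σ, hσ, χ, hσχ, hφχ⟩

theorem InClSubNeg.inCl {S : Set (MuForm P)} {φ : MuForm P} (h : InClSubNeg S φ) : InCl S φ := by
  induction h with
  | base hφ => exact .base hφ
  | sub _ hψ ih => exact .sub ih hψ
  | neg _ ih => exact .neg ih

inductive DotModality
  | dia
  | box

namespace DotModality

def dual : DotModality → DotModality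
  | dia => box
  | box => dia

def apply : DotModality → MuForm P → MuForm P
  | dia => dotDia
  | box => dotBox

theorem neg_apply (a : DotModality) (φ : MuForm P) : (a.apply φ).neg = a.dual.apply φ.neg := by
  cases a <;> rfl

theorem eq_of_subStep_apply {a : DotModality} {φ ψ : MuForm P} (h : SubStep ψ (a.apply φ)) :
    ψ = φ := by
  cases a <;> cases h <;> first | rfl | contradiction

end DotModality

def applyWord : List DotModality → MuForm P → MuForm P
  | [], φ => φ
  | a :: w, φ => a.apply (applyWord w φ)

theorem neg_applyWord (w : List DotModality) (φ : MuForm P) :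
    (applyWord w φ).neg = applyWord (w.map DotModality.dual) φ.neg := by
  induction w with
  | nil => rfl
  | cons a w ih => simp [applyWord, DotModality.neg_apply, ih]

theorem InCl.exists_eq_applyWord {S : Set (MuForm P)} {φ : MuForm P} (h : InCl S φ) :
    ∃ w ψ, InClSubNeg S ψ ∧ φ = applyWord w ψ := by
  induction h with
  | base hφ => exact ⟨[], _, .base hφ, rfl⟩
  | dot _ ih =>
    obtain ⟨w, ψ, hψ, rfl⟩ := ih
    exact ⟨.dia :: w, ψ, hψ, rfl⟩
  | sub _ hχ ih =>
    obtain ⟨w, ψ, hψ, rfl⟩ := ih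
    cases w with
    | nil => exact ⟨[], _, hψ.sub hχ, rfl⟩
    | cons a w => exact ⟨w, ψ, hψ, DotModality.eq_of_subStep_apply hχ⟩
  | neg _ ih =>
    obtain ⟨w, ψ, hψ, rfl⟩ := ih
    exact ⟨_, _, hψ.neg, neg_applyWord w ψ⟩

/-- Like `applyWord`, but realising `⊡` as `¬⋄̇¬`, which keeps the result inside `InCl`. -/
def applyWordInCl : List DotModality → MuForm P → MuForm P
  | [], φ => φ
  | .dia :: w, φ => dotDia (applyWordInCl w φ)
  | .box :: w, φ => (dotDia (applyWordInCl w φ).neg).neg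

theorem InCl.applyWordInCl {S : Set (MuForm P)} {φ : MuForm P} (h : InCl S φ)
    (w : List DotModality) : InCl S (applyWordInCl w φ) := by
  induction w with
  | nil => exact h
  | cons a w ih => cases a with
    | dia => exact ih.dot
    | box => exact ih.neg.dot.neg

section Semantics

variable {W : Type} (r : W → W → Prop)

def dotDiaSet (X : Set W) : Set W := X ∪ {w | ∃ u, r w u ∧ u ∈ X}

def dotBoxSet (X : Set W) : Set W := X ∩ {w | ∀ u, r w u → u ∈ X}

theorem compl_dotDiaSet (X : Set W) : (dotDiaSet r X)ᶜ = dotBoxSet r Xᶜ := by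
  ext w
  simp [dotDiaSet, dotBoxSet]

theorem compl_dotBoxSet (X : Set W) : (dotBoxSet r X)ᶜ = dotDiaSet r Xᶜ := by
  rw [← compl_compl (dotDiaSet r Xᶜ), compl_dotDiaSet, compl_compl]

variable {r}

theorem dotDiaSet_mono {X Y : Set W} (h : X ⊆ Y) : dotDiaSet r X ⊆ dotDiaSet r Y :=
  Set.union_subset_union h fun _ ⟨u, hu, hX⟩ => ⟨u, hu, h hX⟩

theorem dotBoxSet_mono {X Y : Set W} (h : X ⊆ Y) : dotBoxSet r X ⊆ dotBoxSet r Y :=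
  Set.inter_subset_inter h fun _ hX u hu => h (hX u hu)

theorem dotDiaSet_dotDiaSet (hr : WeaklyTransitive r) (X : Set W) :
    dotDiaSet r (dotDiaSet r X) = dotDiaSet r X := by
  refine (Set.union_subset subset_rfl ?_).antisymm Set.subset_union_left
  rintro w ⟨u, hwu, hu | ⟨v, huv, hv⟩⟩
  · exact .inr ⟨u, hwu, hu⟩
  · by_cases hwv : w = v
    · exact .inl (hwv ▸ hv)
    · exact .inr ⟨v, hr w u v hwv hwu huv, hv⟩

theorem dotBoxSet_dotBoxSet (hr : WeaklyTransitive r) (X : Set W) :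
    dotBoxSet r (dotBoxSet r X) = dotBoxSet r X := by
  rw [← compl_inj_iff, compl_dotBoxSet, compl_dotBoxSet, dotDiaSet_dotDiaSet hr]

theorem dotDiaSet_dotBoxSet_dotDiaSet_dotBoxSet (hr : WeaklyTransitive r) (X : Set W) :
    dotDiaSet r (dotBoxSet r (dotDiaSet r (dotBoxSet r X))) = dotDiaSet r (dotBoxSet r X) := by
  refine Set.Subset.antisymm ?_ (dotDiaSet_mono ?_)
  · calc dotDiaSet r (dotBoxSet r (dotDiaSet r (dotBoxSet r X)))
        ⊆ dotDiaSet r (dotDiaSet r (dotBoxSet r X)) := dotDiaSet_mono Set.inter_subset_left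
      _ = dotDiaSet r (dotBoxSet r X) := dotDiaSet_dotDiaSet hr _
  · calc dotBoxSet r X = dotBoxSet r (dotBoxSet r X) := (dotBoxSet_dotBoxSet hr X).symm
      _ ⊆ dotBoxSet r (dotDiaSet r (dotBoxSet r X)) := dotBoxSet_mono Set.subset_union_left

theorem dotBoxSet_dotDiaSet_dotBoxSet_dotDiaSet (hr : WeaklyTransitive r) (X : Set W) :
    dotBoxSet r (dotDiaSet r (dotBoxSet r (dotDiaSet r X))) = dotBoxSet r (dotDiaSet r X) := by
  rw [← compl_inj_iff]
  simp only [compl_dotBoxSet, compl_dotDiaSet, dotDiaSet_dotBoxSet_dotDiaSet_dotBoxSet hr]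

variable (r)

def DotModality.sem : DotModality → Set W → Set W
  | .dia => dotDiaSet r
  | .box => dotBoxSet r

def wordSem : List DotModality → Set W → Set W
  | [], X => X
  | a :: w, X => a.sem r (wordSem w X)

end Semantics

theorem sat_neg_neg {W : Type} (M : KModel W P) (φ : MuForm P) (e : ℕ → Set W) :
    φ.neg.neg.sat M e = φ.sat M e := by
  induction φ generalizing e with
  | tru => exact Set.eq_univ_of_forall fun w => ⟨Set.univ, fun _ h => h, trivial⟩
  | _ => simp [MuForm.neg, MuForm.sat, *]

theorem sat_applyWord {W : Type} (M : KModel W P) (w : List DotModality) (φ : MuForm P)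
    (e : ℕ → Set W) : (applyWord w φ).sat M e = wordSem M.rel w (φ.sat M e) := by
  induction w with
  | nil => rfl
  | cons a w ih => rw [applyWord, wordSem, ← ih]; cases a <;> rfl

theorem sat_applyWordInCl {W : Type} (M : KModel W P) (w : List DotModality) (φ : MuForm P)
    (e : ℕ → Set W) : (applyWordInCl w φ).sat M e = wordSem M.rel w (φ.sat M e) := by
  induction w with
  | nil => rfl
  | cons a w ih => cases a with
    | dia => rw [applyWordInCl, wordSem, ← ih]; rfl
    | box =>
      rw [applyWordInCl, wordSem, ← ih, ← sat_neg_neg M (applyWordInCl w φ)]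
      rfl

open DotModality in
def sevenWords : List (List DotModality) :=
  [[], [dia], [box], [dia, box], [box, dia], [dia, box, dia], [box, dia, box]]

open DotModality in
/-- The reductions use `⋄̇⋄̇ = ⋄̇`, `⊡⊡ = ⊡`, `⋄̇⊡⋄̇⊡ = ⋄̇⊡` and `⊡⋄̇⊡⋄̇ = ⊡⋄̇`. -/
def consReduce : DotModality → List DotModality → List DotModality
  | dia, [] => [dia]
  | dia, [dia] => [dia]
  | dia, [box] => [dia, box]
  | dia, [dia, box] => [dia, box]
  | dia, [box, dia] => [dia, box, dia]
  | dia, [dia, box, dia] => [dia, box, dia]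
  | dia, [box, dia, box] => [dia, box]
  | box, [] => [box]
  | box, [box] => [box]
  | box, [dia] => [box, dia]
  | box, [box, dia] => [box, dia]
  | box, [dia, box] => [box, dia, box]
  | box, [box, dia, box] => [box, dia, box]
  | box, [dia, box, dia] => [box, dia]
  | a, v => a :: v

theorem consReduce_mem_sevenWords (a : DotModality) {v : List DotModality}
    (hv : v ∈ sevenWords) : consReduce a v ∈ sevenWords := by
  simp only [sevenWords, List.mem_cons, List.not_mem_nil, or_false] at hv
  rcases hv with rfl | rfl | rfl | rfl | rfl | rfl | rfl <;> cases a <;>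
    simp [consReduce, sevenWords]

theorem wordSem_consReduce {W : Type} {r : W → W → Prop} (hr : WeaklyTransitive r)
    (a : DotModality) {v : List DotModality} (hv : v ∈ sevenWords) (X : Set W) :
    wordSem r (consReduce a v) X = wordSem r (a :: v) X := by
  simp only [sevenWords, List.mem_cons, List.not_mem_nil, or_false] at hv
  rcases hv with rfl | rfl | rfl | rfl | rfl | rfl | rfl <;> cases a <;>
    simp only [consReduce, wordSem, DotModality.sem, dotDiaSet_dotDiaSet hr,
      dotBoxSet_dotBoxSet hr, dotDiaSet_dotBoxSet_dotDiaSet_dotBoxSet hr,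
      dotBoxSet_dotDiaSet_dotBoxSet_dotDiaSet hr]

theorem exists_mem_sevenWords_wordSem_eq (w : List DotModality) :
    ∃ v ∈ sevenWords, ∀ (W : Type) (r : W → W → Prop), WeaklyTransitive r →
      ∀ X : Set W, wordSem r v X = wordSem r w X := by
  induction w with
  | nil => exact ⟨[], by simp [sevenWords], fun _ _ _ _ => rfl⟩
  | cons a w ih =>
    obtain ⟨v, hv, hvw⟩ := ih
    refine ⟨consReduce a v, consReduce_mem_sevenWords a hv, fun W r hr X => ?_⟩
    rw [wordSem_consReduce hr a hv, wordSem, wordSem, hvw W r hr]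

/-- For every finite set `Σ₀ ⊆ L_μ`, the closure
`Σ = Cl_{⋄̇, sub*, ¬}(Σ₀)` contains only finitely many formulas up to semantic
equivalence over weakly transitive Kripke models: there is a finite set `T ⊆ Σ` of
representatives such that every `φ ∈ Σ` is equivalent, in every weakly transitive
Kripke model (under every environment for the fixed-point variables), to some `ψ ∈ T`. -/
theorem closure_finite_up_to_equivalence {P : Type} (S0 : Set (MuForm P))
    (hfin : S0.Finite) :
    ∃ T : Set (MuForm P), T.Finite ∧ T ⊆ {φ | InCl S0 φ} ∧
      ∀ φ, InCl S0 φ → ∃ ψ ∈ T,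
        ∀ (W : Type) (M : KModel W P), WeaklyTransitive M.rel →
          ∀ e : Nat → Set W, MuForm.sat M φ e = MuForm.sat M ψ e := by
  refine ⟨(fun p => applyWordInCl p.1 p.2) '' ({v | v ∈ sevenWords} ×ˢ {ψ | InClSubNeg S0 ψ}),
    (sevenWords.finite_toSet.prod (finite_setOf_inClSubNeg hfin)).image _, ?_, ?_⟩
  · rintro _ ⟨⟨v, ψ⟩, ⟨-, hψ⟩, rfl⟩
    exact hψ.inCl.applyWordInCl v
  · intro φ hφ
    obtain ⟨w, ψ, hψ, rfl⟩ := hφ.exists_eq_applyWord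
    obtain ⟨v, hv, hvw⟩ := exists_mem_sevenWords_wordSem_eq w
    refine ⟨applyWordInCl v ψ, ⟨(v, ψ), ⟨hv, hψ⟩, rfl⟩, fun W M hM e => ?_⟩
    rw [sat_applyWord, sat_applyWordInCl, hvw W M.rel hM]

end TangledMu
end
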